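/- Suppose an upper-triangular-type linear system over a field holds: for variables x₀, x₁, ..., x_r and for each q ∈ {0,...,r} the equation Σ_{q'=0}^{r} C^{r+q-q'+1}(k) · x_{q'} = 0, where C^s(k) = 2^s binomial(k,s) (zero for s > k), and r < k. Then x₀ = x₁ = ⋯ = x_r = 0. -/

import Mathlib

/-!
Apply a linear functional to reduce to scalars `y₀, …, y_r`, and put `P = ∑ y_j X^j`. The
equations say exactly that the coefficients of `X^(r+1), …, X^(2r+1)` in `F = P · (1 + 2X)^k`
vanish, so `F`, of degree at most `k + r`, has at most `k` nonzero coefficients. But `-1/2` is a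
root of `F` of multiplicity at least `k`, and a nonzero polynomial has fewer roots at a nonzero
point (counted with multiplicity) than nonzero coefficients: divide by `X` while the constant
term vanishes, otherwise differentiate. Hence `P = 0`.
-/

open Finset

namespace Polynomial

section Semiring

variable {R : Type*} [Semiring R]

theorem card_support_divX_le (p : R[X]) : #p.divX.support ≤ #p.support :=
  card_le_card_of_injOn (· + 1) (fun n hn => by simpa [coeff_divX] using hn)
    (fun _ _ _ _ h => Nat.succ_injective h)

theorem card_support_derivative_le (p : R[X]) :
    #(derivative p).support ≤ #(p.support.erase 0) := by
  refine card_le_card_of_injOn (· + 1) (fun n hn => ?_) (fun _ _ _ _ h => Nat.succ_injective h)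
  simp only [coe_erase, Set.mem_sdiff, mem_coe, mem_support_iff, Set.mem_singleton_iff] at hn ⊢
  exact ⟨fun h => hn (by simp [coeff_derivative, h]), Nat.succ_ne_zero n⟩

theorem card_support_add_card_le {p : R[X]} {d : ℕ} (hp : p.natDegree ≤ d) {s : Finset ℕ}
    (hs : s ⊆ range (d + 1)) (hzero : ∀ n ∈ s, p.coeff n = 0) :
    #p.support + #s ≤ d + 1 := by
  have hdisj : Disjoint p.support s :=
    disjoint_left.2 fun n hn hns => mem_support_iff.1 hn (hzero n hns)
  rw [← card_union_of_disjoint hdisj, ← card_range (d + 1)]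
  refine card_le_card (union_subset (supp_subset_range_natDegree_succ.trans ?_) hs)
  exact range_subset_range.2 (by omega)

end Semiring

theorem coeff_one_add_C_mul_X_pow {R : Type*} [CommSemiring R] (c : R) (k s : ℕ) :
    ((1 + C c * X) ^ k).coeff s = c ^ s * k.choose s := by
  have : (1 + C c * X) ^ k = ((1 + X) ^ k).comp (C c * X) := by simp [pow_comp]
  rw [this, comp_C_mul_X_coeff, coeff_one_add_X_pow, mul_comm]

theorem coeff_ofFn_mul {R : Type*} [Semiring R] [DecidableEq R] {m n : ℕ} (hmn : m ≤ n + 1)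
    (v : Fin m → R) (p : R[X]) :
    (ofFn m v * p).coeff n = ∑ j : Fin m, v j * p.coeff (n - j) := by
  rw [ofFn_eq_sum_monomial, sum_mul, finsetSum_coeff]
  refine sum_congr rfl fun j _ => ?_
  rw [← C_mul_X_pow_eq_monomial, mul_assoc, coeff_C_mul, coeff_X_pow_mul', if_pos (by omega)]

section Domain

variable {R : Type*} [CommRing R] [IsDomain R]

theorem rootMultiplicity_lt_card_support [CharZero R] {a : R} (ha : a ≠ 0) {p : R[X]}
    (hp : p ≠ 0) : p.rootMultiplicity a < #p.support := by
  induction hn : p.natDegree using Nat.strong_induction_on generalizing p with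
  | _ n ih =>
  have hcard : 0 < #p.support := card_pos.2 (nonempty_support_iff.2 hp)
  by_cases hroot : p.IsRoot a
  swap
  · rwa [rootMultiplicity_eq_zero hroot]
  have hdeg : p.natDegree ≠ 0 := fun h0 => by
    rw [eq_C_of_natDegree_eq_zero h0] at hroot hp
    simp_all
  by_cases h0 : p.coeff 0 = 0
  · have hX : X * p.divX = p := by simpa [h0] using X_mul_divX_add p
    have hdivX : p.divX ≠ 0 := right_ne_zero_of_mul (hX.symm ▸ hp)
    have hmult : p.rootMultiplicity a = p.divX.rootMultiplicity a := by
      rw [← hX, rootMultiplicity_mul (hX.symm ▸ hp),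
        rootMultiplicity_eq_zero (by simpa using ha), zero_add, hX]
    calc p.rootMultiplicity a = p.divX.rootMultiplicity a := hmult
      _ < #p.divX.support :=
        ih _ (by rw [← hn, natDegree_divX_eq_natDegree_tsub_one]; omega) hdivX rfl
      _ ≤ #p.support := card_support_divX_le p
  · have hp' : derivative p ≠ 0 := mt derivative_eq_zero.1 hdeg
    have hmult := derivative_rootMultiplicity_of_root hroot
    have hpos := (rootMultiplicity_pos hp).2 hroot
    have hlt := ih _ (hn ▸ natDegree_derivative_lt hdeg) hp' rfl
    have hle := card_support_derivative_le p
    rw [card_erase_of_mem (mem_support_iff.2 h0)] at hle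
    omega

theorem eq_zero_of_coeff_mul_eq_zero_of_X_sub_C_pow_dvd [CharZero R] {a : R} (ha : a ≠ 0)
    {k r : ℕ} (hr : r < k) {P Q : R[X]} (hP : P.natDegree ≤ r) (hQ : Q ≠ 0)
    (hQdvd : (X - C a) ^ k ∣ Q) (hQdeg : Q.natDegree ≤ k)
    (hgap : ∀ n ∈ Icc (r + 1) (2 * r + 1), (P * Q).coeff n = 0) : P = 0 := by
  by_contra hP0
  have hF : P * Q ≠ 0 := mul_ne_zero hP0 hQ
  have hmult : k ≤ (P * Q).rootMultiplicity a := (le_rootMultiplicity_iff hF).2 (hQdvd.mul_left P)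
  have hcard := card_support_add_card_le (natDegree_mul_le.trans (add_le_add hP hQdeg))
    (fun n hn => by simp only [mem_Icc, mem_range] at hn ⊢; omega) hgap
  have := rootMultiplicity_lt_card_support ha hF
  simp only [Nat.card_Icc] at hcard
  omega

end Domain

end Polynomial

open Polynomial in
theorem eq_zero_of_sum_two_pow_mul_choose_mul_eq_zero {K : Type*} [Field K] [CharZero K]
    {k r : ℕ} (hr : r < k) {y : Fin (r + 1) → K}
    (h : ∀ q : Fin (r + 1), ∑ j : Fin (r + 1),
      ((2 ^ (r + q.val + 1 - j.val) * Nat.choose k (r + q.val + 1 - j.val) : ℕ) : K) * y j = 0) :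
    y = 0 := by
  classical
  have hgap : ∀ n ∈ Icc (r + 1) (2 * r + 1),
      (ofFn (r + 1) y * (1 + C 2 * X) ^ k).coeff n = 0 := by
    intro n hn
    obtain ⟨q, rfl⟩ : ∃ q : Fin (r + 1), n = r + q.val + 1 := by
      simp only [mem_Icc] at hn
      exact ⟨⟨n - (r + 1), by omega⟩, by simp; omega⟩
    rw [coeff_ofFn_mul (by omega), ← h q]
    refine sum_congr rfl fun j _ => ?_
    rw [coeff_one_add_C_mul_X_pow, mul_comm]
    push_cast
    rfl
  have hroot : X - C (-2⁻¹ : K) ∣ 1 + C 2 * X := dvd_iff_isRoot.2 (by simp)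
  have hlin : (1 + C (2 : K) * X).natDegree ≤ 1 := by compute_degree
  have hlin0 : 1 + C (2 : K) * X ≠ 0 := fun h0 => by simpa using congrArg (eval 0) h0
  have hP : ofFn (r + 1) y = 0 :=
    eq_zero_of_coeff_mul_eq_zero_of_X_sub_C_pow_dvd (by norm_num) hr
      (Nat.lt_succ_iff.1 (ofFn_natDegree_lt (by omega) y)) (pow_ne_zero k hlin0)
      (pow_dvd_pow_of_dvd hroot k) (by simpa using natDegree_pow_le_of_le k hlin) hgap
  exact injective_ofFn (r + 1) (hP.trans (map_zero _).symm)

/-- If variables `x₀,…,x_r` in a `ℚ`-vector space satisfy, for each `q ∈ {0,…,r}`,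
`Σ_{q'=0}^{r} C^{r+q-q'+1}(k) · x_{q'} = 0`, where `C^s(k) = 2^s·C(k,s)` (automatically
zero for `s > k`) and `r < k`, then all `x_{q'}` vanish. -/
theorem linear_system_C_only_zero_solution (k r : ℕ) (hr : r < k)
    (V : Type*) [AddCommGroup V] [Module ℚ V] (x : Fin (r + 1) → V)
    (h : ∀ q : Fin (r + 1),
      ∑ q' : Fin (r + 1),
        ((2 ^ (r + q.val + 1 - q'.val) *
            Nat.choose k (r + q.val + 1 - q'.val) : ℕ) : ℚ) • x q' = 0) :
    ∀ q' : Fin (r + 1), x q' = 0 := by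
  intro q'
  rw [← Module.forall_dual_apply_eq_zero_iff ℚ]
  intro φ
  have hy := eq_zero_of_sum_two_pow_mul_choose_mul_eq_zero hr (y := fun j => φ (x j))
    fun q => by simpa using congrArg φ (h q)
  exact congrFun hy q'
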